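/- arXiv:2105.06397 — 4 statements merged into one kernel-verified Lean document; each statement's English description precedes it below -/
import Mathlib

section
/- Let K ⊆ L be an extension of fields of characteristic p > 0, each equipped with a family of additive operators (∂_i)_{i∈I} such that ∂_i on L restricts to ∂_i on K, and such that for each i, ∂_i(a·x) = a ∂_i(x) whenever a is a common constant (i.e. killed by all operators) and x is arbitrary (that is, the operators are linear over the constants). Assume the constants K^∂ and L^∂ are subfields. Then L^∂ and K are linearly disjoint over K^∂. -/
theorem stmt6 (p : ℕ) [Fact p.Prime]
    {L : Type*} [Field L] [CharP L p] (K : Subfield L)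
    {I : Type*} (d : I → L → L) (m : I → ℕ)
    (hadd : ∀ i (x y : L), d i (x + y) = d i x + d i y)
    (hres : ∀ i, ∀ x ∈ K, d i x ∈ K)
    (hlin : ∀ i (a x : L), (∀ j, d j a = 0) → d i (a * x) = a ^ p ^ m i * d i x)
    (hm : ∀ i, m i = 0)
    (hLconst : ∃ F : Subfield L, (F : Set L) = {x : L | ∀ i, d i x = 0})
    (hKconst : ∃ F : Subfield L, (F : Set L) = {x : L | x ∈ K ∧ ∀ i, d i x = 0}) :
    ∀ (k : ℕ) (x : Fin k → L), (∀ j, ∀ i, d i (x j) = 0) →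
      (∀ c : Fin k → L, (∀ j, c j ∈ K ∧ ∀ i, d i (c j) = 0) →
        ∑ j, c j * x j = 0 → ∀ j, c j = 0) →
      ∀ c : Fin k → L, (∀ j, c j ∈ K) → ∑ j, c j * x j = 0 → ∀ j, c j = 0 := by
  intro k x hx hindep
  classical
  obtain ⟨FK, hFK⟩ := hKconst
  have h1 : ∀ i, d i (1 : L) = 0 := by
    intro i
    have h : (1 : L) ∈ {x : L | x ∈ K ∧ ∀ i, d i x = 0} := by
      rw [← hFK]; exact FK.one_mem
    exact h.2 i
  have h0 : ∀ i, d i (0 : L) = 0 := by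
    intro i
    have := hadd i 0 0
    rw [add_zero] at this
    exact left_eq_add.mp this
  suffices H : ∀ n (c : Fin k → L),
      (Finset.univ.filter (fun j => c j ≠ 0)).card = n →
      (∀ j, c j ∈ K) → ∑ j, c j * x j = 0 → ∀ j, c j = 0 by
    intro c hcK hsum
    exact H _ c rfl hcK hsum
  intro n
  induction n using Nat.strong_induction_on with
  | _ n ih =>
    intro c hcard hcK hsum j
    by_contra hcj
    set S := Finset.univ.filter (fun j => c j ≠ 0) with hS
    have hj0 : j ∈ S := by simp [hS, hcj]
    have hnpos : 0 < n := hcard ▸ Finset.card_pos.mpr ⟨j, hj0⟩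
    set c' : Fin k → L := fun j' => (c j)⁻¹ * c j' with hc'
    have hc'K : ∀ j', c' j' ∈ K := fun j' =>
      K.mul_mem (K.inv_mem (hcK j)) (hcK j')
    have hc'j : c' j = 1 := inv_mul_cancel₀ hcj
    have hc'sum : ∑ j', c' j' * x j' = 0 := by
      have : ∑ j', c' j' * x j' = (c j)⁻¹ * ∑ j', c j' * x j' := by
        rw [Finset.mul_sum]
        exact Finset.sum_congr rfl fun j' _ => by rw [hc', mul_assoc]
      rw [this, hsum, mul_zero]
    have hc'supp : ∀ j', c' j' = 0 ↔ c j' = 0 := by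
      intro j'
      constructor
      · intro h
        rcases mul_eq_zero.mp h with h | h
        · exact absurd (inv_eq_zero.mp h) hcj
        · exact h
      · intro h; rw [hc']; simp [h]
    -- for each i, the vector d i ∘ c' is a relation with smaller support
    have hdzero : ∀ i j', d i (c' j') = 0 := by
      intro i
      set e : Fin k → L := fun j' => d i (c' j') with he
      have heK : ∀ j', e j' ∈ K := fun j' => hres i _ (hc'K j')
      have hesum : ∑ j', e j' * x j' = 0 := by
        let D : L →+ L := AddMonoidHom.mk' (d i) (hadd i)
        have hD : ∀ y, D y = d i y := fun y => rfl
        have := map_sum D (fun j' => c' j' * x j') Finset.univ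
        rw [hc'sum] at this
        have h2 : ∀ j', D (c' j' * x j') = e j' * x j' := by
          intro j'
          rw [hD, mul_comm (c' j') (x j'), hlin i (x j') (c' j') (hx j'),
            hm i, pow_zero, pow_one, mul_comm]
        rw [map_zero] at this
        calc ∑ j', e j' * x j'
            = ∑ j', D (c' j' * x j') :=
              Finset.sum_congr rfl fun j' _ => (h2 j').symm
          _ = 0 := this.symm
      have hesub : (Finset.univ.filter (fun j' => e j' ≠ 0)) ⊆ S.erase j := by
        intro j' hj'
        simp only [Finset.mem_filter, Finset.mem_univ, true_and] at hj'
        rw [Finset.mem_erase]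
        constructor
        · rintro rfl
          rw [he] at hj'
          simp only at hj'
          rw [hc'j] at hj'
          exact hj' (h1 i)
        · simp only [hS, Finset.mem_filter, Finset.mem_univ, true_and]
          intro hc0
          apply hj'
          rw [he]
          simp only
          rw [(hc'supp j').mpr hc0]
          exact h0 i
      have hltcard : (Finset.univ.filter (fun j' => e j' ≠ 0)).card < n := by
        calc (Finset.univ.filter (fun j' => e j' ≠ 0)).card
            ≤ (S.erase j).card := Finset.card_le_card hesub
          _ < S.card := Finset.card_erase_lt_of_mem hj0
          _ = n := hcard
      exact ih _ hltcard e rfl heK hesum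
    have := hindep c' (fun j' => ⟨hc'K j', fun i => hdzero i j'⟩) hc'sum j
    rw [hc'j] at this
    exact one_ne_zero this
end

section
/- Let K ⊆ L be an extension of fields of characteristic p > 0, each equipped with a family of additive operators (∂_i)_{i∈I} such that ∂_i on L restricts to ∂_i on K, and for each i there is m_i ∈ ℕ such that ∂_i(a·x) = a^{p^{m_i}} ∂_i(x) whenever a is a common constant and x is arbitrary. Assume K is strict, i.e. the constants K^∂ equal K^p. Then L^∂ and K are linearly disjoint over K^∂ = K^p. -/
/-! Induct on the length of the tuple of constants. Strictness makes independence pass to Frobenius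
powers: if constants `x_j` are independent over `K^∂`, they are independent over `K` (induction
hypothesis), so the `x_j ^ p` are independent over `K^p = K^∂`; iterating, every tuple
`(x_j ^ p ^ M)` is independent over `K`. Given a `K`-relation `∑ c_j x_j = 0` among `n + 1`
constants with `c_{j₀} = 1`, applying `∂_i` yields the `K`-relation `∑ ∂_i(c_j) x_j ^ p ^ m_i = 0`
in which the `j₀` term vanishes, so all `∂_i(c_j)` vanish. Thus the `c_j` are constants, contradicting
independence over `K^∂`. -/

open Finset

def LinIndepOver {L ι : Type*} [CommSemiring L] [Fintype ι] (S : Set L) (x : ι → L) : Prop :=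
  ∀ c : ι → L, (∀ j, c j ∈ S) → ∑ j, c j * x j = 0 → ∀ j, c j = 0

theorem LinIndepOver.pow_char {L ι : Type*} [CommSemiring L] [IsReduced L] [Fintype ι]
    (p : ℕ) [ExpChar L p] {S : Set L} {x : ι → L} (hx : LinIndepOver S x) :
    LinIndepOver {b | ∃ a ∈ S, a ^ p = b} (fun j => x j ^ p) := by
  intro c hc hsum
  choose a haS hac using hc
  have hroot : (∑ j, a j * x j) ^ p = 0 := by
    simp_rw [sum_pow_char, mul_pow, hac, hsum]
  intro j
  rw [← hac j, hx a haS (IsNilpotent.eq_zero ⟨p, hroot⟩) j, zero_pow (expChar_ne_zero L p)]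

theorem LinIndepOver.comp_succAbove {L : Type*} [CommSemiring L] {S : Set L} (hS : 0 ∈ S)
    {n : ℕ} {x : Fin (n + 1) → L} (hx : LinIndepOver S x) (j₀ : Fin (n + 1)) :
    LinIndepOver S (x ∘ j₀.succAbove) := by
  intro c hc hsum j
  set c' : Fin (n + 1) → L := j₀.insertNth 0 c with hc'
  have hc'S : ∀ t, c' t ∈ S := Fin.succAboveCases j₀ (by simpa [hc']) (by simpa [hc'])
  have hsum' : ∑ t, c' t * x t = 0 := by
    simpa [hc', Fin.sum_univ_succAbove _ j₀] using hsum
  simpa [hc'] using hx c' hc'S hsum' (j₀.succAbove j)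

theorem sum_apply_mul_pow_eq_zero {L ι I : Type*} [CommRing L] [Fintype ι] {p : ℕ}
    (d : I → L → L) (m : I → ℕ) (hadd : ∀ i (x y : L), d i (x + y) = d i x + d i y)
    (hlin : ∀ i (a x : L), (∀ j, d j a = 0) → d i (a * x) = a ^ p ^ m i * d i x)
    {x c : ι → L} (hx : ∀ j i, d i (x j) = 0) (hsum : ∑ j, c j * x j = 0) (i : I) :
    ∑ j, d i (c j) * x j ^ p ^ m i = 0 := by
  let D : L →+ L := AddMonoidHom.mk' (d i) (hadd i)
  calc ∑ j, d i (c j) * x j ^ p ^ m i = D (∑ j, x j * c j) := by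
        rw [map_sum]
        exact sum_congr rfl fun j _ => by rw [AddMonoidHom.mk'_apply, hlin i _ _ (hx j), mul_comm]
    _ = 0 := by simp_rw [mul_comm (x _), hsum, map_zero]

def LinDisjointAt {L : Type*} [Field L] (K C : Subfield L) (n : ℕ) : Prop :=
  ∀ x : Fin n → L, (∀ j, x j ∈ C) → LinIndepOver (K ⊓ C : Subfield L) x → LinIndepOver K x

theorem LinDisjointAt.linIndepOver_pow_pow {L : Type*} [Field L] {p : ℕ} [ExpChar L p]
    {K C : Subfield L} {n : ℕ} (hKC : LinDisjointAt K C n)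
    (hstrict : ((K ⊓ C : Subfield L) : Set L) = {b | ∃ a ∈ K, a ^ p = b})
    {x : Fin n → L} (hxC : ∀ j, x j ∈ C) (hx : LinIndepOver (K ⊓ C : Subfield L) x) (M : ℕ) :
    LinIndepOver K (fun j => x j ^ p ^ M) := by
  refine hKC _ (fun j => pow_mem (hxC j) _) ?_
  induction M with
  | zero => simpa using hx
  | succ M ih =>
    have := (hKC _ (fun j => pow_mem (hxC j) _) ih).pow_char p
    simpa [hstrict, pow_succ, pow_mul] using this

section Operators

variable {L I : Type*} [Field L] {p : ℕ} [ExpChar L p] (d : I → L → L) (m : I → ℕ)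
  {K C : Subfield L}

theorem mem_of_sum_mul_eq_zero_of_pivot_mem
    (hadd : ∀ i (x y : L), d i (x + y) = d i x + d i y)
    (hres : ∀ i, ∀ x ∈ K, d i x ∈ K)
    (hlin : ∀ i (a x : L), (∀ j, d j a = 0) → d i (a * x) = a ^ p ^ m i * d i x)
    (hC : (C : Set L) = {a | ∀ i, d i a = 0})
    (hstrict : ((K ⊓ C : Subfield L) : Set L) = {b | ∃ a ∈ K, a ^ p = b})
    {n : ℕ} (hKC : LinDisjointAt K C n) {x c : Fin (n + 1) → L} (hxC : ∀ j, x j ∈ C)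
    (hx : LinIndepOver (K ⊓ C : Subfield L) x) (hcK : ∀ j, c j ∈ K)
    (hsum : ∑ j, c j * x j = 0) {j₀ : Fin (n + 1)} (hcj₀ : c j₀ ∈ C) (j : Fin (n + 1)) :
    c j ∈ C := by
  have hmemC : ∀ a, a ∈ C ↔ ∀ i, d i a = 0 := fun a => Set.ext_iff.mp hC a
  rcases eq_or_ne j j₀ with rfl | hj
  · exact hcj₀
  · obtain ⟨t, rfl⟩ := Fin.exists_succAbove_eq hj
    refine (hmemC _).2 fun i => ?_
    have hrel := sum_apply_mul_pow_eq_zero d m hadd hlin (fun j => (hmemC _).1 (hxC j)) hsum i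
    rw [Fin.sum_univ_succAbove _ j₀, (hmemC _).1 hcj₀ i, zero_mul, zero_add] at hrel
    exact hKC.linIndepOver_pow_pow hstrict (fun _ => hxC _) (hx.comp_succAbove (zero_mem _) j₀)
      (m i) _ (fun _ => hres i _ (hcK _)) hrel t

theorem LinDisjointAt.succ
    (hadd : ∀ i (x y : L), d i (x + y) = d i x + d i y)
    (hres : ∀ i, ∀ x ∈ K, d i x ∈ K)
    (hlin : ∀ i (a x : L), (∀ j, d j a = 0) → d i (a * x) = a ^ p ^ m i * d i x)
    (hC : (C : Set L) = {a | ∀ i, d i a = 0})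
    (hstrict : ((K ⊓ C : Subfield L) : Set L) = {b | ∃ a ∈ K, a ^ p = b})
    {n : ℕ} (hKC : LinDisjointAt K C n) : LinDisjointAt K C (n + 1) := by
  intro x hxC hx c hcK hsum
  by_contra! hne
  obtain ⟨j₀, hj₀⟩ := hne
  set c' := fun j => c j * (c j₀)⁻¹ with hc'
  have hc'K : ∀ j, c' j ∈ K := fun j => mul_mem (hcK j) (inv_mem (hcK j₀))
  have hc'sum : ∑ j, c' j * x j = 0 := by
    simp only [hc', mul_right_comm _ (c j₀)⁻¹, ← sum_mul, hsum, zero_mul]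
  have hc'j₀ : c' j₀ = 1 := mul_inv_cancel₀ hj₀
  have hc'C := mem_of_sum_mul_eq_zero_of_pivot_mem d m hadd hres hlin hC hstrict hKC hxC hx hc'K
    hc'sum (hc'j₀ ▸ one_mem C)
  exact one_ne_zero (hc'j₀ ▸ hx c' (fun j => ⟨hc'K j, hc'C j⟩) hc'sum j₀)

end Operators

theorem stmt7_general (p : ℕ) [Fact p.Prime]
    {L : Type*} [Field L] [CharP L p] (K : Subfield L)
    {I : Type*} (d : I → L → L) (m : I → ℕ)
    (hadd : ∀ i (x y : L), d i (x + y) = d i x + d i y)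
    (hres : ∀ i, ∀ x ∈ K, d i x ∈ K)
    (hlin : ∀ i (a x : L), (∀ j, d j a = 0) → d i (a * x) = a ^ p ^ m i * d i x)
    (hLconst : ∃ F : Subfield L, (F : Set L) = {x : L | ∀ i, d i x = 0})
    (hstrict : {x : L | x ∈ K ∧ ∀ i, d i x = 0} = {x : L | ∃ y ∈ K, y ^ p = x}) :
    ∀ (k : ℕ) (x : Fin k → L), (∀ j, ∀ i, d i (x j) = 0) →
      (∀ c : Fin k → L, (∀ j, c j ∈ K ∧ ∀ i, d i (c j) = 0) →
        ∑ j, c j * x j = 0 → ∀ j, c j = 0) →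
      ∀ c : Fin k → L, (∀ j, c j ∈ K) → ∑ j, c j * x j = 0 → ∀ j, c j = 0 := by
  obtain ⟨C, hC⟩ := hLconst
  have hKC : ((K ⊓ C : Subfield L) : Set L) = {x | x ∈ K ∧ ∀ i, d i x = 0} := by
    show (K : Set L) ∩ C = _
    rw [hC]
    rfl
  have hdisj : ∀ k, LinDisjointAt K C k := by
    intro k
    induction k with
    | zero => exact fun _ _ _ _ _ _ j => j.elim0
    | succ n ih => exact ih.succ d m hadd hres hlin hC (hKC.trans hstrict)
  intro k x hx hindep
  exact hdisj k x (fun j => (Set.ext_iff.mp hC _).2 (hx j)) (hKC ▸ hindep)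

theorem stmt7 (p : ℕ) [Fact p.Prime]
    {L : Type*} [Field L] [CharP L p] (K : Subfield L)
    {I : Type*} (d : I → L → L) (m : I → ℕ)
    (hadd : ∀ i (x y : L), d i (x + y) = d i x + d i y)
    (hres : ∀ i, ∀ x ∈ K, d i x ∈ K)
    (hlin : ∀ i (a x : L), (∀ j, d j a = 0) → d i (a * x) = a ^ p ^ m i * d i x)
    (hLconst : ∃ F : Subfield L, (F : Set L) = {x : L | ∀ i, d i x = 0})
    (hKconst : ∃ F : Subfield L, (F : Set L) = {x : L | x ∈ K ∧ ∀ i, d i x = 0})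
    (hstrict : {x : L | x ∈ K ∧ ∀ i, d i x = 0} = {x : L | ∃ y ∈ K, y ^ p = x}) :
    ∀ (k : ℕ) (x : Fin k → L), (∀ j, ∀ i, d i (x j) = 0) →
      (∀ c : Fin k → L, (∀ j, c j ∈ K ∧ ∀ i, d i (c j) = 0) →
        ∑ j, c j * x j = 0 → ∀ j, c j = 0) →
      ∀ c : Fin k → L, (∀ j, c j ∈ K) → ∑ j, c j * x j = 0 → ∀ j, c j = 0 :=
  stmt7_general p K d m hadd hres hlin hLconst hstrict
end

section
/- Let (K, ∂) be a strict Fr^n-differential field (K^∂ = K^p) and K ⊆ L an extension of Fr^n-differential fields. Suppose a ∈ L and m > 0 are such that ∂^m(a) is separably algebraic over K(a, ∂(a), …, ∂^{m-1}(a)). Then for every k > m, ∂^k(a) lies in the field K(a, ∂(a), …, ∂^m(a)). -/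
def IsFrDeriv {R : Type*} [CommRing R] (q : ℕ) (d : R → R) : Prop :=
  (∀ x y, d (x + y) = d x + d y) ∧ (∀ x y, d (x * y) = x ^ q * d y + y ^ q * d x)

/-!
Let `E = K(a, ∂a, …, ∂ᵐa)`. Since `∂` satisfies a Leibniz rule, it maps a field generated over `K`
by elements `s` into `E` as soon as it maps `K` and every `s` into `E`, and the generators are
themselves in `E`. It therefore suffices to show `∂ᵐ⁺¹a ∈ E`: then `∂` maps `E` into itself and every
iterate `∂ᵏa` lies in `E`. For this, apply `∂` to `f(∂ᵐa) = 0`, where `f` is the minimal polynomial of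
`∂ᵐa` over `F = K(a, …, ∂ᵐ⁻¹a)`: in characteristic `p` with `q = pⁿ` this gives
`0 = f^∂((∂ᵐa)^q) + f'(∂ᵐa)^q · ∂ᵐ⁺¹a`, where `f'(∂ᵐa) ≠ 0` by separability and all other terms
lie in `E` because `∂ F ⊆ E`.
-/

open Polynomial

namespace IsFrDeriv

section CommRing

variable {R : Type*} [CommRing R] {q : ℕ} {d : R → R}

theorem map_add (hd : IsFrDeriv q d) (x y : R) : d (x + y) = d x + d y := hd.1 x y

theorem map_mul (hd : IsFrDeriv q d) (x y : R) : d (x * y) = x ^ q * d y + y ^ q * d x :=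
  hd.2 x y

theorem map_zero (hd : IsFrDeriv q d) : d 0 = 0 := by
  have h := hd.map_add 0 0
  rw [add_zero] at h
  linear_combination -h

theorem map_one (hd : IsFrDeriv q d) : d 1 = 0 := by
  have h := hd.map_mul 1 1
  rw [one_pow, one_mul] at h
  linear_combination -h

theorem map_pow (hd : IsFrDeriv q d) (x : R) (k : ℕ) :
    d (x ^ k) = k * (x ^ (k - 1)) ^ q * d x := by
  induction k with
  | zero => simp [hd.map_one]
  | succ k ih =>
    rcases k with _ | k
    · simp
    · rw [pow_succ, hd.map_mul, ih]
      simp only [Nat.add_sub_cancel, Nat.cast_add, Nat.cast_one]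
      rw [pow_succ x k]
      ring

theorem map_eval {p n : ℕ} [Fact p.Prime] [CharP R p] (hd : IsFrDeriv (p ^ n) d)
    (f : R[X]) (x : R) :
    d (f.eval x) =
      (f.derivative.eval x) ^ p ^ n * d x + f.sum fun i c => d c * (x ^ p ^ n) ^ i := by
  induction f using Polynomial.induction_on' with
  | add f g hf hg =>
    rw [eval_add, hd.map_add, hf, hg, derivative_add, eval_add, add_pow_char_pow,
      sum_add_index f g _ (fun _ => by rw [hd.map_zero, zero_mul])
        (fun _ _ _ => by rw [hd.map_add, add_mul])]
    ring
  | monomial k c =>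
    have hk : (k : R) ^ p ^ n = k := by rw [← iterateFrobenius_def, map_natCast]
    rw [eval_monomial, hd.map_mul, hd.map_pow, derivative_monomial, eval_monomial,
      sum_monomial_index _ _ (by rw [hd.map_zero, zero_mul]), mul_pow, mul_pow, hk, ← pow_mul,
      ← pow_mul, mul_comm k]
    ring

end CommRing

section Field

variable {L : Type*} [Field L] {q : ℕ} {d : L → L}

theorem map_inv (hd : IsFrDeriv q d) (x : L) : d x⁻¹ = -(x⁻¹ ^ q) ^ 2 * d x := by
  rcases eq_or_ne x 0 with rfl | hx
  · simp [hd.map_zero]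
  have h := hd.map_mul x x⁻¹
  rw [mul_inv_cancel₀ hx, hd.map_one] at h
  have hxq : x ^ q * x⁻¹ ^ q = 1 := by rw [← mul_pow, mul_inv_cancel₀ hx, one_pow]
  linear_combination (-(x⁻¹ ^ q)) * h - d x⁻¹ * hxq

variable {K : Type*} [Field K] [Algebra K L]

theorem map_mem_of_mem_adjoin (hd : IsFrDeriv q d) {S : Set L} {E : IntermediateField K L}
    (hSE : S ⊆ E) (hK : ∀ x : K, d (algebraMap K L x) ∈ E) (hS : ∀ s ∈ S, d s ∈ E)
    {x : L} (hx : x ∈ IntermediateField.adjoin K S) : d x ∈ E := by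
  have hle : IntermediateField.adjoin K S ≤ E := IntermediateField.adjoin_le_iff.2 hSE
  induction hx using IntermediateField.adjoin_induction with
  | mem s hs => exact hS s hs
  | algebraMap x => exact hK x
  | add x y _ _ hx hy => rw [hd.map_add]; exact add_mem hx hy
  | inv x hxS hx =>
    rw [hd.map_inv]
    exact mul_mem (neg_mem (pow_mem (pow_mem (inv_mem (hle hxS)) _) _)) hx
  | mul x y hxS hyS hx hy =>
    rw [hd.map_mul]
    exact add_mem (mul_mem (pow_mem (hle hxS) _) hy) (mul_mem (pow_mem (hle hyS) _) hx)

theorem map_mem_of_isSeparable {p n : ℕ} [Fact p.Prime] [CharP L p] (hd : IsFrDeriv (p ^ n) d)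
    {F E : IntermediateField K L} (hFE : F ≤ E) (hF : ∀ x ∈ F, d x ∈ E) {b : L} (hb : b ∈ E)
    (hsep : IsSeparable F b) : d b ∈ E := by
  set g := (minpoly F b).map (algebraMap F L)
  have hcoeff (i : ℕ) : g.coeff i ∈ F := by
    rw [coeff_map]
    exact (minpoly F b).coeff i |>.2
  have hroot : g.eval b = 0 := by
    rw [eval_map_algebraMap]
    exact minpoly.aeval F b
  have hsimple : g.derivative.eval b ≠ 0 := by
    rw [derivative_map, eval_map_algebraMap]
    exact hsep.aeval_derivative_ne_zero (minpoly.aeval F b)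
  have heval : g.derivative.eval b ∈ E := by
    rw [eval_eq_sum, sum_def]
    refine sum_mem fun i _ => mul_mem ?_ (pow_mem hb i)
    rw [coeff_derivative]
    exact mul_mem (hFE (hcoeff (i + 1))) (add_mem (natCast_mem E i) (one_mem E))
  have hsum : (g.sum fun i c => d c * (b ^ p ^ n) ^ i) ∈ E := by
    rw [sum_def]
    exact sum_mem fun i _ => mul_mem (hF _ (hcoeff i)) (pow_mem (pow_mem hb _) _)
  have hid := hd.map_eval g b
  rw [hroot, hd.map_zero] at hid
  have hdb : d b = -(g.sum fun i c => d c * (b ^ p ^ n) ^ i) / g.derivative.eval b ^ p ^ n := by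
    rw [eq_div_iff (pow_ne_zero _ hsimple)]
    linear_combination -hid
  rw [hdb]
  exact div_mem (neg_mem hsum) (pow_mem heval _)

end Field

end IsFrDeriv

theorem stmt12_general (p n : ℕ) [Fact p.Prime]
    {K L : Type*} [Field K] [Field L] [Algebra K L] [CharP L p]
    (dK : K → K) (dL : L → L)
    (hdL : IsFrDeriv (p ^ n) dL)
    (hcompat : ∀ x : K, dL (algebraMap K L x) = algebraMap K L (dK x))
    (a : L) (m : ℕ)
    (hsep : IsSeparable
      (IntermediateField.adjoin K (Set.range fun i : Fin m => dL^[(i : ℕ)] a))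
      (dL^[m] a)) :
    ∀ k : ℕ, m < k →
      dL^[k] a ∈
        IntermediateField.adjoin K (Set.range fun i : Fin (m + 1) => dL^[(i : ℕ)] a) := by
  set E := IntermediateField.adjoin K (Set.range fun i : Fin (m + 1) => dL^[(i : ℕ)] a)
  have hgen (i : ℕ) (hi : i ≤ m) : dL^[i] a ∈ E :=
    IntermediateField.subset_adjoin K _ ⟨⟨i, Nat.lt_succ_of_le hi⟩, rfl⟩
  have hK (x : K) : dL (algebraMap K L x) ∈ E := hcompat x ▸ E.algebraMap_mem _
  have hstep (i : ℕ) (hi : i < m) : dL (dL^[i] a) ∈ E :=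
    Function.iterate_succ_apply' dL i a ▸ hgen (i + 1) hi
  have hF : ∀ x ∈ IntermediateField.adjoin K (Set.range fun i : Fin m => dL^[(i : ℕ)] a),
      dL x ∈ E := by
    refine fun x => hdL.map_mem_of_mem_adjoin ?_ hK ?_
    · rintro _ ⟨i, rfl⟩; exact hgen i i.2.le
    · rintro _ ⟨i, rfl⟩; exact hstep i i.2
  have hlast : dL (dL^[m] a) ∈ E := by
    refine hdL.map_mem_of_isSeparable ?_ hF (hgen m le_rfl) hsep
    exact IntermediateField.adjoin_le_iff.2 fun _ ⟨i, hi⟩ => hi ▸ hgen i i.2.le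
  have hE : Set.MapsTo dL E E := by
    refine fun x => hdL.map_mem_of_mem_adjoin ?_ hK ?_
    · rintro _ ⟨i, rfl⟩; exact hgen i (Nat.lt_succ_iff.1 i.2)
    · rintro _ ⟨⟨i, hi⟩, rfl⟩
      rcases (Nat.lt_succ_iff.1 hi).lt_or_eq with hi | rfl
      · exact hstep i hi
      · exact hlast
  exact fun k _ => hE.iterate k (hgen 0 m.zero_le)

theorem stmt12 (p n : ℕ) [Fact p.Prime] (hn : 0 < n)
    {K L : Type*} [Field K] [Field L] [Algebra K L] [CharP K p] [CharP L p]
    (dK : K → K) (dL : L → L)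
    (hdK : IsFrDeriv (p ^ n) dK) (hdL : IsFrDeriv (p ^ n) dL)
    (hcompat : ∀ x : K, dL (algebraMap K L x) = algebraMap K L (dK x))
    (hstrict : ∀ x : K, dK x = 0 ↔ ∃ y : K, y ^ p = x)
    (a : L) (m : ℕ) (hm : 0 < m)
    (hsep : IsSeparable
      (IntermediateField.adjoin K (Set.range fun i : Fin m => dL^[(i : ℕ)] a))
      (dL^[m] a)) :
    ∀ k : ℕ, m < k →
      dL^[k] a ∈
        IntermediateField.adjoin K (Set.range fun i : Fin (m + 1) => dL^[(i : ℕ)] a) :=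
  stmt12_general p n dK dL hdL hcompat a m hsep
end

section
/- Let K be a field of characteristic p > 0, let t ∈ K ∖ K^p, and let f_1, …, f_m ∈ K{X} be differential polynomials over a Fr^n-differential field (K, ∂) with m < p^N. For any Fr^n-differential extension L of K in which t ∉ L^p, and any a ∈ L: f_1(a) = ⋯ = f_m(a) = 0 if and only if f(a) = 0, where f = f_1^{p^N} + t·f_2^{p^N} + ⋯ + t^{m−1}·f_m^{p^N}. -/
section

variable {L : Type*} [Field L] {p : ℕ} [Fact p.Prime] [CharP L p] {t : L}

open Polynomial in
theorem le_natDegree_minpoly_fieldRange_iterateFrobenius (ht : ¬∃ s : L, s ^ p = t) (N : ℕ) :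
    p ^ N ≤ (minpoly (iterateFrobenius L p N).fieldRange t).natDegree := by
  have hp : p.Prime := Fact.out
  have hmem : t ^ p ^ N ∈ (algebraMap (iterateFrobenius L p N).fieldRange L).range :=
    ⟨⟨t ^ p ^ N, t, iterateFrobenius_def p N t⟩, rfl⟩
  obtain ⟨k, ⟨_, s, rfl⟩, hk⟩ := (minpoly.natSepDegree_eq_one_iff_eq_X_pow_sub_C p).1
    ((minpoly.natSepDegree_eq_one_iff_pow_mem p).2 ⟨N, hmem⟩)
  rw [hk, natDegree_X_pow_sub_C]
  refine Nat.pow_le_pow_right hp.pos (not_lt.1 fun hkN => ht ?_)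
  have hroot := minpoly.aeval (iterateFrobenius L p N).fieldRange t
  simp only [hk, map_sub, map_pow, aeval_X, aeval_C, sub_eq_zero] at hroot
  replace hroot : t ^ p ^ k = s ^ p ^ N := hroot
  -- for `k < N`, injectivity of `x ↦ x ^ p ^ k` turns `hroot` into `t = s ^ p ^ (N - k)`
  refine ⟨s ^ p ^ (N - k - 1), iterateFrobenius_inj L p k ?_⟩
  rw [iterateFrobenius_def, iterateFrobenius_def, hroot, ← pow_mul, ← pow_mul, ← pow_succ',
    ← pow_add]
  exact congrArg (s ^ p ^ ·) (by omega)

theorem linearIndependent_pow_fieldRange_iterateFrobenius (ht : ¬∃ s : L, s ^ p = t) {N m : ℕ}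
    (hm : m ≤ p ^ N) :
    LinearIndependent (iterateFrobenius L p N).fieldRange fun i : Fin m => t ^ (i : ℕ) := by
  have h := hm.trans (le_natDegree_minpoly_fieldRange_iterateFrobenius ht N)
  exact (linearIndependent_pow t).comp (Fin.castLE h) (Fin.castLE_injective h)

theorem sum_pow_mul_pow_eq_zero_iff (ht : ¬∃ s : L, s ^ p = t) {N m : ℕ} (hm : m ≤ p ^ N)
    (c : Fin m → L) : ∑ i : Fin m, t ^ (i : ℕ) * c i ^ p ^ N = 0 ↔ ∀ i, c i = 0 := by
  have hp : p.Prime := Fact.out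
  refine ⟨fun h i => ?_, fun h => by simp [h, hp.ne_zero]⟩
  let g : Fin m → (iterateFrobenius L p N).fieldRange := fun i =>
    ⟨c i ^ p ^ N, c i, iterateFrobenius_def p N _⟩
  have hg : g i = 0 := Fintype.linearIndependent_iff.1
    (linearIndependent_pow_fieldRange_iterateFrobenius ht hm) g
    (by simpa [g, Subfield.smul_def, mul_comm] using h) i
  exact pow_eq_zero_iff (pow_ne_zero N hp.ne_zero) |>.1 (congrArg Subtype.val hg)

end

open MvPolynomial in
theorem stmt19_general (p N : ℕ) [Fact p.Prime]
    {K L : Type*} [Field K] [Field L] [Algebra K L] [CharP L p]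
    (dL : L → L) (t : K)
    (htL : ¬∃ s : L, s ^ p = algebraMap K L t)
    (m : ℕ) (hm : m < p ^ N) (f : Fin m → MvPolynomial ℕ K) (a : L) :
    (∀ i, eval₂ (algebraMap K L) (fun j => dL^[j] a) (f i) = 0) ↔
      eval₂ (algebraMap K L) (fun j => dL^[j] a)
        (∑ i : Fin m, C t ^ (i : ℕ) * f i ^ p ^ N) = 0 := by
  simp only [eval₂_sum, eval₂_mul, eval₂_pow, eval₂_C]
  exact (sum_pow_mul_pow_eq_zero_iff htL hm.le _).symm

open MvPolynomial in
theorem stmt19 (p n N : ℕ) [Fact p.Prime] (hn : 0 < n)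
    {K L : Type*} [Field K] [Field L] [Algebra K L] [CharP K p] [CharP L p]
    (dK : K → K) (dL : L → L)
    (hdK : IsFrDeriv (p ^ n) dK) (hdL : IsFrDeriv (p ^ n) dL)
    (hcompat : ∀ x : K, dL (algebraMap K L x) = algebraMap K L (dK x))
    (t : K) (htK : ¬∃ s : K, s ^ p = t)
    (htL : ¬∃ s : L, s ^ p = algebraMap K L t)
    (m : ℕ) (hm : m < p ^ N) (f : Fin m → MvPolynomial ℕ K) (a : L) :
    (∀ i, eval₂ (algebraMap K L) (fun j => dL^[j] a) (f i) = 0) ↔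
      eval₂ (algebraMap K L) (fun j => dL^[j] a)
        (∑ i : Fin m, C t ^ (i : ℕ) * f i ^ p ^ N) = 0 :=
  stmt19_general p N dL t htL m hm f a
end
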